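/- arXiv:2508.15692 — 2 statements merged into one kernel-verified Lean document; each statement's English description precedes it below -/
import Mathlib

section
/- Let T = G ∨ H with supp(T) = supp(G) ⊕ supp(H), supp(G) ≠ {0} ≠ supp(H), and let D be any decision rule. Then: (a) CO(G,T) ∩ CO(T,D) ⊆ CO(G,D); (b) AT(G,T) ∩ CO(T,D) ⊆ AT(G,D); (c) CO(T,D) ⊆ CO(G,D) ∪ AT(G,D). -/
open Filter
open scoped Topology

namespace MRD

abbrev Score (K : ℕ) := Fin K → ℝ

/-- The k-th standard basis vector of `ℝ^K`. -/
def stdBasis {K : ℕ} (k : Fin K) : Score K := Pi.single k 1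

/-- `T` is a cutoff rule: `T x c = g (1[x_1 > c_1], ..., 1[x_K > c_K])` for a Boolean `g`. -/
def IsCutoffRule {K : ℕ} (T : Score K → Score K → Bool) : Prop :=
  ∃ g : (Fin K → Bool) → Bool, ∀ x c, T x c = g fun k => decide (c k < x k)

/-- Support directions `S(T)`. -/
def suppDirs {K : ℕ} (T : Score K → Score K → Bool) : Set (Fin K) :=
  {k | ∃ c : Score K, ∃ l : ℝ, T 0 (c + l • stdBasis k) ≠ T 0 c}

/-- `supp(T)`: the span of the standard basis vectors in the support directions. -/
def supp {K : ℕ} (T : Score K → Score K → Bool) : Submodule ℝ (Score K) :=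
  Submodule.span ℝ (stdBasis '' suppDirs T)

/-- `N^T`: scores that never affect `T`. -/
def nspace {K : ℕ} (T : Score K → Score K → Bool) : Set (Score K) :=
  {X | ∀ c, T X c = T 0 c}

/-- The component `X^T` of `X` in `supp(T)` (coordinatewise indicator projection). -/
noncomputable def projT {K : ℕ} (T : Score K → Score K → Bool) (X : Score K) : Score K :=
  (suppDirs T).indicator X

/-- The component `X^{⊥T}` of `X` in `N^T`. -/
noncomputable def perpT {K : ℕ} (T : Score K → Score K → Bool) (X : Score K) : Score K :=
  X - projT T X

/-- Nevertaker of `T` w.r.t. decision rule `D`, for a unit with score `X`. -/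
def Nevertaker {K : ℕ} (T : Score K → Score K → Bool) (D : Score K → Bool)
    (X : Score K) : Prop :=
  ∀ c ∈ supp T, D (perpT T X - c) = false

/-- Alwaystaker of `T` w.r.t. `D`. -/
def Alwaystaker {K : ℕ} (T : Score K → Score K → Bool) (D : Score K → Bool)
    (X : Score K) : Prop :=
  ∀ c ∈ supp T, D (perpT T X - c) = true

/-- Complier of `T` w.r.t. `D`. -/
def Complier {K : ℕ} (T : Score K → Score K → Bool) (D : Score K → Bool)
    (X : Score K) : Prop :=
  ∀ c ∈ supp T, T 0 c = D (perpT T X - c)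

/-- Defier of `T` w.r.t. `D`. -/
def Defier {K : ℕ} (T : Score K → Score K → Bool) (D : Score K → Bool)
    (X : Score K) : Prop :=
  ∀ c ∈ supp T, T 0 c ≠ D (perpT T X - c)

/-- Indecisive: none of the four categories. -/
def Indecisive {K : ℕ} (T : Score K → Score K → Bool) (D : Score K → Bool)
    (X : Score K) : Prop :=
  ¬ Nevertaker T D X ∧ ¬ Alwaystaker T D X ∧ ¬ Complier T D X ∧ ¬ Defier T D X

/-- Nevertaker, cutoff-rule form: `D(X | c) = 0` for all `c ∈ supp(T)`. -/
def NevertakerC {K : ℕ} (T D : Score K → Score K → Bool) (X : Score K) : Prop :=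
  ∀ c ∈ supp T, D X c = false

/-- Alwaystaker, cutoff-rule form. -/
def AlwaystakerC {K : ℕ} (T D : Score K → Score K → Bool) (X : Score K) : Prop :=
  ∀ c ∈ supp T, D X c = true

/-- Complier, cutoff-rule form: `T(X | c) = D(X | c)` for all `c ∈ supp(T)`. -/
def ComplierC {K : ℕ} (T D : Score K → Score K → Bool) (X : Score K) : Prop :=
  ∀ c ∈ supp T, T X c = D X c

/-- Defier, cutoff-rule form. -/
def DefierC {K : ℕ} (T D : Score K → Score K → Bool) (X : Score K) : Prop :=
  ∀ c ∈ supp T, T X c ≠ D X c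

lemma stdBasis_apply {K : ℕ} (k j : Fin K) : stdBasis k j = if j = k then 1 else 0 := by
  simp [stdBasis, Pi.single_apply]

lemma cutoff_update {K : ℕ} {R : Score K → Score K → Bool}
    {g : (Fin K → Bool) → Bool} (hg : ∀ x c, R x c = g fun k => decide (c k < x k))
    {k : Fin K} (hk : k ∉ suppDirs R) (v : Fin K → Bool) (b : Bool) :
    g (Function.update v k b) = g v := by
  classical
  simp only [suppDirs, Set.mem_setOf_eq, not_exists, not_not] at hk
  set c : Score K := fun j => if v j then -1 else 1 with hc
  set l : ℝ := (if b then (-1:ℝ) else 1) - c k with hl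
  have h1 : (fun j => decide (c j < (0:Score K) j)) = v := by
    funext j; by_cases h : v j <;> simp [hc, h]
  have h2 : (fun j => decide ((c + l • stdBasis k) j < (0:Score K) j)) = Function.update v k b := by
    funext j
    by_cases hj : j = k
    · rw [hj, Function.update_self]
      have hv : (c + l • stdBasis k) k = (if b then (-1:ℝ) else 1) := by
        simp [hl, stdBasis_apply]
      rw [show ((0:Score K) k) = (0:ℝ) from rfl, hv]
      by_cases h : b <;> simp [h] <;> norm_num
    · have : (c + l • stdBasis k) j = c j := by
        simp [stdBasis_apply, hj]
      rw [this, Function.update_of_ne hj]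
      by_cases h : v j <;> simp [hc, h]
    
  have := hk c l
  rw [hg, hg, h1, h2] at this
  exact this

lemma g_agree {K : ℕ} {R : Score K → Score K → Bool}
    {g : (Fin K → Bool) → Bool} (hg : ∀ x c, R x c = g fun k => decide (c k < x k))
    (v w : Fin K → Bool) (h : ∀ k, v k ≠ w k → k ∉ suppDirs R) : g v = g w := by
  classical
  have key : ∀ s : Finset (Fin K), ∀ w : Fin K → Bool,
      (∀ k, v k ≠ w k → k ∈ s ∧ k ∉ suppDirs R) → g v = g w := by
    intro s
    induction s using Finset.induction with
    | empty =>
      intro w hw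
      have : v = w := funext fun k => by
        by_contra hne
        simpa using (hw k hne).1
      rw [this]
    | @insert a s ha ih =>
      intro w hw
      set w' := Function.update w a (v a) with hw'
      have h1 : g v = g w' := by
        apply ih
        intro k hk
        have hka : k ≠ a := fun e => by
          subst e; exact hk (by simp [hw'])
        have : v k ≠ w k := by
          simpa [hw', Function.update_of_ne hka] using hk
        rcases hw k this with ⟨hmem, hns⟩
        exact ⟨(Finset.mem_insert.mp hmem).resolve_left hka, hns⟩
      by_cases hva : v a = w a
      · rw [h1, hw', hva, Function.update_eq_self]
      · have hna : a ∉ suppDirs R := (hw a hva).2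
        rw [h1, hw', cutoff_update hg hna]
  exact key ((Finset.univ.filter (fun k => v k ≠ w k))) w
    (fun k hk => ⟨by simp [hk], h k hk⟩)

lemma cutoff_agree {K : ℕ} {R : Score K → Score K → Bool}
    (hR : IsCutoffRule R) {c d : Score K}
    (h : ∀ k ∈ suppDirs R, c k = d k) : R 0 c = R 0 d := by
  obtain ⟨g, hg⟩ := hR
  rw [hg, hg]
  apply g_agree hg
  intro k hk
  intro hks
  apply hk
  rw [h k hks]

lemma mem_span_stdBasis {K : ℕ} (S : Set (Fin K)) (x : Score K) :
    x ∈ Submodule.span ℝ (stdBasis '' S) ↔ ∀ k ∉ S, x k = 0 := by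
  classical
  constructor
  · intro hx k hk
    have hle : Submodule.span ℝ (stdBasis '' S) ≤ LinearMap.ker (LinearMap.proj (R := ℝ) (φ := fun _ : Fin K => ℝ) k) := by
      rw [Submodule.span_le]
      rintro _ ⟨j, hj, rfl⟩
      have : j ≠ k := fun e => hk (e ▸ hj)
      simp [LinearMap.mem_ker, stdBasis_apply, (Ne.symm this)]
    simpa [LinearMap.mem_ker] using hle hx
  · intro hx
    have hrepr : x = ∑ k, Pi.single k (x k) := (Finset.univ_sum_single x).symm
    rw [hrepr]
    apply Submodule.sum_mem
    intro k _
    by_cases hk : k ∈ S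
    · have : Pi.single k (x k) = x k • stdBasis k := by
        funext j
        by_cases hj : j = k <;> simp [stdBasis, Pi.single_apply, hj]
      rw [this]
      exact Submodule.smul_mem _ _ (Submodule.subset_span ⟨k, hk, rfl⟩)
    · rw [hx k hk]
      simp

lemma stdBasis_mem_span_iff {K : ℕ} (S : Set (Fin K)) (j : Fin K) :
    stdBasis j ∈ Submodule.span ℝ (stdBasis '' S) ↔ j ∈ S := by
  rw [mem_span_stdBasis]
  constructor
  · intro h
    by_contra hj
    have := h j hj
    simp [stdBasis_apply] at this
  · intro hj k hk
    have : k ≠ j := fun e => hk (e ▸ hj)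
    simp [stdBasis_apply, this]


/-- for `T = G ∨ H` with `supp(T) = supp(G) ⊕ supp(H)` and any decision
rule `D`: (a) `CO(G,T) ∩ CO(T,D) ⊆ CO(G,D)`; (b) `AT(G,T) ∩ CO(T,D) ⊆ AT(G,D)`;
(c) `CO(T,D) ⊆ CO(G,D) ∪ AT(G,D)`. -/
theorem stmt12 {K : ℕ} (T G H : Score K → Score K → Bool) (D : Score K → Bool)
    (hG : IsCutoffRule G) (hH : IsCutoffRule H)
    (hTdef : ∀ x c, T x c = (G x c || H x c))
    (hdisj : Disjoint (supp G) (supp H))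
    (hsum : supp T = supp G ⊔ supp H)
    (hGnd : supp G ≠ ⊥) (hHnd : supp H ≠ ⊥) (X : Score K) :
    (Complier G (fun y => T y 0) X → Complier T D X → Complier G D X) ∧
    (Alwaystaker G (fun y => T y 0) X → Complier T D X → Alwaystaker G D X) ∧
    (Complier T D X → Complier G D X ∨ Alwaystaker G D X) := by
  classical
  obtain ⟨gg, hgG⟩ := hG
  -- basic set facts
  have hSunion : suppDirs T = suppDirs G ∪ suppDirs H := by
    have hspan : supp T = Submodule.span ℝ (stdBasis '' (suppDirs G ∪ suppDirs H)) := by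
      rw [hsum, Set.image_union, Submodule.span_union]; rfl
    ext j
    have h1 := stdBasis_mem_span_iff (suppDirs T) j
    have h2 := stdBasis_mem_span_iff (suppDirs G ∪ suppDirs H) j
    rw [← h1, ← h2]
    show stdBasis j ∈ supp T ↔ _
    rw [hspan]
  have hSdisj : ∀ k, k ∈ suppDirs G → k ∉ suppDirs H := by
    intro k hkG hkH
    have hmem : stdBasis k ∈ supp G ⊓ supp H :=
      ⟨(stdBasis_mem_span_iff _ _).mpr hkG, (stdBasis_mem_span_iff _ _).mpr hkH⟩
    rw [Disjoint.eq_bot hdisj] at hmem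
    have : stdBasis k k = 0 := by rw [Submodule.mem_bot] at hmem; rw [hmem]; rfl
    simp [stdBasis_apply] at this
  have hGle : supp G ≤ supp T := by rw [hsum]; exact le_sup_left
  have hHle : supp H ≤ supp T := by rw [hsum]; exact le_sup_right
  -- the H-component of X
  set XH : Score K := fun k => if k ∈ suppDirs H then X k else 0 with hXH
  have hXHmem : XH ∈ supp H := by
    rw [supp, mem_span_stdBasis]
    intro k hk
    simp [hXH, hk]
  -- coordinates of perp projections
  have hperpG : ∀ k, perpT G X k = if k ∈ suppDirs G then 0 else X k := by
    intro k
    simp only [perpT, projT, Pi.sub_apply, Set.indicator_apply]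
    by_cases h : k ∈ suppDirs G <;> simp [h]
  have hperpT : ∀ k, perpT T X k = if k ∈ suppDirs T then 0 else X k := by
    intro k
    simp only [perpT, projT, Pi.sub_apply, Set.indicator_apply]
    by_cases h : k ∈ suppDirs T <;> simp [h]
  have hperp_eq : perpT G X = perpT T X + XH := by
    funext k
    rw [Pi.add_apply, hperpG k, hperpT k, hSunion, hXH]
    by_cases hg : k ∈ suppDirs G
    · simp [hg, hSdisj k hg]
    · by_cases hh : k ∈ suppDirs H <;> simp [hg, hh]
  -- membership characterization for elements of supp G
  have hsuppG0 : ∀ c ∈ supp G, ∀ k, k ∉ suppDirs G → c k = 0 := by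
    intro c hc
    rw [supp, mem_span_stdBasis] at hc
    exact hc
  -- key1 : value of T at shifted cutoff
  have key1 : ∀ c ∈ supp G, T 0 (c - XH) = (G 0 c || H 0 (-XH)) := by
    intro c hc
    rw [hTdef]
    have e1 : G 0 (c - XH) = G 0 c := by
      apply cutoff_agree ⟨gg, hgG⟩
      intro k hk
      have : XH k = 0 := by simp [hXH, hSdisj k hk]
      simp [this]
    have e2 : H 0 (c - XH) = H 0 (-XH) := by
      apply cutoff_agree hH
      intro k hk
      have hkG : k ∉ suppDirs G := fun h => hSdisj k h hk
      have : c k = 0 := hsuppG0 c hc k hkG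
      simp [this]
    rw [e1, e2]
  -- negation symmetry for T at cutoff 0
  have hneg : ∀ R : Score K → Score K → Bool, IsCutoffRule R → ∀ x : Score K, R x 0 = R 0 (-x) := by
    rintro R ⟨g, hg⟩ x
    rw [hg, hg]
    congr 1
    funext k
    show decide ((0:Score K) k < x k) = decide ((-x) k < (0:Score K) k)
    have : ((0:Score K) k < x k) ↔ ((-x) k < (0:Score K) k) := by
      simp
    rw [decide_eq_decide]
    exact this
  -- key2 : value of T at perpG X - c
  have key2 : ∀ c ∈ supp G, T (perpT G X - c) 0 = (G 0 c || H 0 (-XH)) := by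
    intro c hc
    rw [hTdef]
    rw [hneg G ⟨gg, hgG⟩, hneg H hH, neg_sub]
    have e1 : G 0 (c - perpT G X) = G 0 c := by
      apply cutoff_agree ⟨gg, hgG⟩
      intro k hk
      have : perpT G X k = 0 := by rw [hperpG k]; simp [hk]
      simp [this]
    have e2 : H 0 (c - perpT G X) = H 0 (-XH) := by
      apply cutoff_agree hH
      intro k hk
      have hkG : k ∉ suppDirs G := fun h => hSdisj k h hk
      have h1 : c k = 0 := hsuppG0 c hc k hkG
      have h2 : perpT G X k = X k := by rw [hperpG k]; simp [hkG]
      have h3 : XH k = X k := by simp [hXH, hk]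
      simp [h1, h2, h3]
    rw [e1, e2]
  -- key3 : relate D at perpG X - c to T at shifted cutoff, given Complier T D X
  have key3 : Complier T D X → ∀ c ∈ supp G, D (perpT G X - c) = T 0 (c - XH) := by
    intro hCTD c hc
    have hmem : c - XH ∈ supp T := Submodule.sub_mem _ (hGle hc) (hHle hXHmem)
    have := hCTD (c - XH) hmem
    have harg : perpT T X - (c - XH) = perpT G X - c := by
      rw [hperp_eq]; ring
    rw [harg] at this
    exact this.symm
  -- existence of c in supp G with G 0 c = false
  have hexF : ∃ c ∈ supp G, G 0 c = false := by
    have hSGne : (suppDirs G).Nonempty := by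
      by_contra h
      rw [Set.not_nonempty_iff_eq_empty] at h
      apply hGnd
      rw [supp, h]
      simp
    obtain ⟨k, hk⟩ := hSGne
    obtain ⟨c0, l, hne⟩ := hk
    have : ∃ c1 : Score K, G 0 c1 = false := by
      cases hv : G 0 c0 with
      | false => exact ⟨c0, hv⟩
      | true =>
        refine ⟨c0 + l • stdBasis k, ?_⟩
        rw [hv] at hne
        exact Bool.not_eq_true _ ▸ (by simpa using hne)
    obtain ⟨c1, hc1⟩ := this
    refine ⟨fun j => if j ∈ suppDirs G then c1 j else 0, ?_, ?_⟩
    · rw [supp, mem_span_stdBasis]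
      intro j hj
      simp [hj]
    · rw [← hc1]
      apply cutoff_agree ⟨gg, hgG⟩
      intro j hj
      simp [hj]
  obtain ⟨cF, hcF, hGF⟩ := hexF
  refine ⟨?_, ?_, ?_⟩
  · -- (a)
    intro hCG hCTD
    have hHfalse : H 0 (-XH) = false := by
      have := hCG cF hcF
      simp only at this
      rw [key2 cF hcF, hGF] at this
      exact this.symm
    intro c hc
    rw [key3 hCTD c hc, key1 c hc, hHfalse, Bool.or_false]
  · -- (b)
    intro hAT hCTD
    have hHtrue : H 0 (-XH) = true := by
      have := hAT cF hcF
      simp only at this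
      rw [key2 cF hcF, hGF] at this
      simpa using this
    intro c hc
    rw [key3 hCTD c hc, key1 c hc, hHtrue, Bool.or_true]
  · -- (c)
    intro hCTD
    cases hb : H 0 (-XH) with
    | false =>
      left
      intro c hc
      rw [key3 hCTD c hc, key1 c hc, hb, Bool.or_false]
    | true =>
      right
      intro c hc
      rw [key3 hCTD c hc, key1 c hc, hb, Bool.or_true]


end MRD
end

section
/- Let T = G ∧ H with supp(T) = supp(G) ⊕ supp(H), supp(G) ≠ {0} ≠ supp(H), and let D be any decision rule. Then: (a) CO(G,T) ∩ DE(T,D) ⊆ DE(G,D); (b) NT(G,T) ∩ DE(T,D) ⊆ AT(G,D); (c) DE(T,D) ⊆ DE(G,D) ∪ AT(G,D). -/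
open Filter
open scoped Topology

namespace MRD

/-! A cutoff rule depends on `(x, c)` only through `c - x`, and `R 0 c` depends only on the
coordinates of `c` in `suppDirs R`. The directions of `G` and `H` are disjoint and together make up
those of `T`, so for `c ∈ supp G` the point `c - X^H` lies in `supp T` and
`X^{⊥G} - c = X^{⊥T} - (c - X^H)`. Hence `T(X^{⊥G} - c | 0)` and, for a defier of `T`,
`¬D(X^{⊥G} - c)` both equal `G(0 | c) ∧ h` for the constant `h = H(0 | -X^H)`, and the three
claims follow by cases on `h`. -/

theorem apply_eq_of_eqOn_of_forall_update {ι α β : Type*} [Fintype ι] [DecidableEq ι]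
    {f : (ι → α) → β} {S : Set ι}
    (hf : ∀ x k a, k ∉ S → f (Function.update x k a) = f x)
    {x y : ι → α} (hxy : Set.EqOn x y S) : f x = f y := by
  classical
  have key : ∀ s : Finset ι, (∀ k ∈ s, k ∉ S) → f (s.piecewise y x) = f x := by
    intro s
    induction s using Finset.induction_on with
    | empty => simp
    | insert j s _ ih =>
      intro hs
      rw [Finset.piecewise_insert, hf _ _ _ (hs j (Finset.mem_insert_self j s)),
        ih fun k hk => hs k (Finset.mem_insert_of_mem hk)]
  have hy : (Finset.univ.filter (· ∉ S)).piecewise y x = y := by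
    funext k
    by_cases hk : k ∈ S
    · simp [Finset.piecewise, hk, hxy hk]
    · simp [Finset.piecewise, hk]
  rw [← key _ fun k hk => (Finset.mem_filter.mp hk).2, hy]

section

variable {K : ℕ}

theorem IsCutoffRule.apply_eq_zero_sub {R : Score K → Score K → Bool} (hR : IsCutoffRule R)
    (x c : Score K) : R x c = R 0 (c - x) := by
  obtain ⟨g, hg⟩ := hR
  simp only [hg, Pi.sub_apply, Pi.zero_apply, sub_neg]

theorem IsCutoffRule.and {T G H : Score K → Score K → Bool} (hG : IsCutoffRule G)
    (hH : IsCutoffRule H) (hT : ∀ x c, T x c = (G x c && H x c)) : IsCutoffRule T := by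
  obtain ⟨g, hg⟩ := hG
  obtain ⟨h, hh⟩ := hH
  exact ⟨fun b => g b && h b, fun x c => by rw [hT, hg, hh]⟩

theorem stdBasis_eq_basisFun : (stdBasis : Fin K → Score K) = Pi.basisFun ℝ (Fin K) := by
  funext k
  simp [stdBasis]

theorem stdBasis_mem_supp_iff {R : Score K → Score K → Bool} {k : Fin K} :
    stdBasis k ∈ supp R ↔ k ∈ suppDirs R := by
  rw [supp, stdBasis_eq_basisFun, Module.Basis.self_mem_span_image]

theorem mem_supp_iff {R : Score K → Score K → Bool} {c : Score K} :
    c ∈ supp R ↔ ∀ k ∉ suppDirs R, c k = 0 := by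
  rw [supp, stdBasis_eq_basisFun, Module.Basis.mem_span_image]
  simp only [Set.subset_def, Finset.mem_coe, Finsupp.mem_support_iff, Pi.basisFun_repr]
  exact forall_congr' fun k => not_imp_comm

theorem apply_zero_update_of_notMem_suppDirs {R : Score K → Score K → Bool} {k : Fin K}
    (hk : k ∉ suppDirs R) (c : Score K) (a : ℝ) : R 0 (Function.update c k a) = R 0 c := by
  simp only [suppDirs, Set.mem_ofPred_eq, not_exists, not_not] at hk
  have : Function.update c k a = c + (a - c k) • stdBasis k := by
    rw [Pi.update_eq_sub_add_single, stdBasis, ← Pi.single_smul', smul_eq_mul, mul_one,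
      Pi.single_sub]
    abel
  rw [this, hk]

theorem apply_zero_congr {R : Score K → Score K → Bool} {c c' : Score K}
    (h : Set.EqOn c c' (suppDirs R)) : R 0 c = R 0 c' :=
  apply_eq_of_eqOn_of_forall_update (fun _ _ _ hk => apply_zero_update_of_notMem_suppDirs hk _ _) h

theorem disjoint_suppDirs_of_disjoint_supp {G H : Score K → Score K → Bool}
    (h : Disjoint (supp G) (supp H)) : Disjoint (suppDirs G) (suppDirs H) := by
  refine Set.disjoint_left.mpr fun k hkG hkH => ?_
  have hk := Submodule.disjoint_def.mp h _ (stdBasis_mem_supp_iff.mpr hkG)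
    (stdBasis_mem_supp_iff.mpr hkH)
  rw [stdBasis_eq_basisFun] at hk
  exact (Pi.basisFun ℝ (Fin K)).ne_zero k hk

theorem suppDirs_eq_union_of_supp_eq_sup {T G H : Score K → Score K → Bool}
    (h : supp T = supp G ⊔ supp H) : suppDirs T = suppDirs G ∪ suppDirs H := by
  ext k
  rw [← stdBasis_mem_supp_iff, h, supp, supp, ← Submodule.span_union, ← Set.image_union,
    stdBasis_eq_basisFun, Module.Basis.self_mem_span_image]

theorem perpT_apply_of_mem {R : Score K → Score K → Bool} {k : Fin K} (hk : k ∈ suppDirs R)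
    (X : Score K) : perpT R X k = 0 := by
  simp [perpT, projT, hk]

section Conjunction

variable {T G H : Score K → Score K → Bool}

theorem projT_eq_projT_add_projT (hdirs : suppDirs T = suppDirs G ∪ suppDirs H)
    (hGH : Disjoint (suppDirs G) (suppDirs H)) (X : Score K) :
    projT T X = projT G X + projT H X := by
  rw [projT, hdirs, Set.indicator_union_of_disjoint hGH]
  rfl

theorem perpT_eq_perpT_add_projT (hdirs : suppDirs T = suppDirs G ∪ suppDirs H)
    (hGH : Disjoint (suppDirs G) (suppDirs H)) (X : Score K) :
    perpT G X = perpT T X + projT H X := by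
  rw [perpT, perpT, projT_eq_projT_add_projT hdirs hGH]
  abel

theorem apply_zero_sub_projT (hGH : Disjoint (suppDirs G) (suppDirs H))
    (hTdef : ∀ x c, T x c = (G x c && H x c)) {c : Score K} (hc : c ∈ supp G) (X : Score K) :
    T 0 (c - projT H X) = (G 0 c && H 0 (-projT H X)) := by
  rw [hTdef]
  congr 1 <;> refine apply_zero_congr fun k hk => ?_
  · simp [projT, hGH.notMem_of_mem_left hk]
  · simp [mem_supp_iff.mp hc k (hGH.notMem_of_mem_right hk)]

theorem Defier.apply_perpT_sub {D : Score K → Bool} {X c : Score K} (hDE : Defier T D X)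
    (hdirs : suppDirs T = suppDirs G ∪ suppDirs H)
    (hGH : Disjoint (suppDirs G) (suppDirs H)) (hTdef : ∀ x c, T x c = (G x c && H x c))
    (hc : c ∈ supp G) :
    D (perpT G X - c) = !(G 0 c && H 0 (-projT H X)) := by
  have hb : c - projT H X ∈ supp T := by
    refine mem_supp_iff.mpr fun k hk => ?_
    rw [hdirs, Set.mem_union, not_or] at hk
    simp [mem_supp_iff.mp hc k hk.1, projT, hk.2]
  rw [perpT_eq_perpT_add_projT hdirs hGH, show perpT T X + projT H X - c =
    perpT T X - (c - projT H X) by abel, ← apply_zero_sub_projT hGH hTdef hc]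
  exact Bool.eq_not.mpr (hDE _ hb).symm

theorem apply_perpT_sub_zero (hdirs : suppDirs T = suppDirs G ∪ suppDirs H)
    (hGH : Disjoint (suppDirs G) (suppDirs H)) (hT : IsCutoffRule T)
    (hTdef : ∀ x c, T x c = (G x c && H x c)) {c : Score K} (hc : c ∈ supp G) (X : Score K) :
    T (perpT G X - c) 0 = (G 0 c && H 0 (-projT H X)) := by
  rw [hT.apply_eq_zero_sub, ← apply_zero_sub_projT hGH hTdef hc, zero_sub, neg_sub]
  refine apply_zero_congr fun k hk => ?_
  rw [Pi.sub_apply, Pi.sub_apply, perpT_eq_perpT_add_projT hdirs hGH, Pi.add_apply,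
    perpT_apply_of_mem hk, zero_add]

end Conjunction

end

theorem stmt13_general {K : ℕ} (T G H : Score K → Score K → Bool) (D : Score K → Bool)
    (hG : IsCutoffRule G) (hH : IsCutoffRule H)
    (hTdef : ∀ x c, T x c = (G x c && H x c))
    (hdisj : Disjoint (supp G) (supp H))
    (hsum : supp T = supp G ⊔ supp H)
    (X : Score K) :
    (Complier G (fun y => T y 0) X → Defier T D X → Defier G D X) ∧
    (Nevertaker G (fun y => T y 0) X → Defier T D X → Alwaystaker G D X) ∧
    (Defier T D X → Defier G D X ∨ Alwaystaker G D X) := by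
  have hdirs := suppDirs_eq_union_of_supp_eq_sup hsum
  have hGH := disjoint_suppDirs_of_disjoint_supp hdisj
  have hT := hG.and hH hTdef
  have hD : Defier T D X → ∀ c ∈ supp G, D (perpT G X - c) = !(G 0 c && H 0 (-projT H X)) :=
    fun hDE c hc => hDE.apply_perpT_sub hdirs hGH hTdef hc
  have hTG : ∀ c ∈ supp G, T (perpT G X - c) 0 = (G 0 c && H 0 (-projT H X)) :=
    fun c hc => apply_perpT_sub_zero hdirs hGH hT hTdef hc X
  refine ⟨fun hCO hDE c hc => ?_, fun hNT hDE c hc => ?_, fun hDE => ?_⟩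
  · have hGc : G 0 c = (G 0 c && H 0 (-projT H X)) := (hCO c hc).trans (hTG c hc)
    rw [hD hDE c hc, ← hGc]
    exact Bool.self_ne_not _
  · have hTc : T (perpT G X - c) 0 = false := hNT c hc
    rw [hD hDE c hc, ← hTG c hc, hTc, Bool.not_false]
  · cases hh : H 0 (-projT H X)
    · exact Or.inr fun c hc => by rw [hD hDE c hc, hh, Bool.and_false, Bool.not_false]
    · exact Or.inl fun c hc => by rw [hD hDE c hc, hh, Bool.and_true]; exact Bool.self_ne_not _

/-- for `T = G ∧ H` with `supp(T) = supp(G) ⊕ supp(H)` and any decision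
rule `D`: (a) `CO(G,T) ∩ DE(T,D) ⊆ DE(G,D)`; (b) `NT(G,T) ∩ DE(T,D) ⊆ AT(G,D)`;
(c) `DE(T,D) ⊆ DE(G,D) ∪ AT(G,D)`. -/
theorem stmt13 {K : ℕ} (T G H : Score K → Score K → Bool) (D : Score K → Bool)
    (hG : IsCutoffRule G) (hH : IsCutoffRule H)
    (hTdef : ∀ x c, T x c = (G x c && H x c))
    (hdisj : Disjoint (supp G) (supp H))
    (hsum : supp T = supp G ⊔ supp H)
    (hGnd : supp G ≠ ⊥) (hHnd : supp H ≠ ⊥) (X : Score K) :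
    (Complier G (fun y => T y 0) X → Defier T D X → Defier G D X) ∧
    (Nevertaker G (fun y => T y 0) X → Defier T D X → Alwaystaker G D X) ∧
    (Defier T D X → Defier G D X ∨ Alwaystaker G D X) :=
  stmt13_general T G H D hG hH hTdef hdisj hsum X

end MRD
end
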